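/- arXiv:1305.4581 — 5 statements merged into one kernel-verified Lean document; each statement's English description precedes it below -/
import Mathlib

section
/- Let a, b, c be real numbers in [-1,1] with 1 + a ≥ b + c. Then for every odd positive integer t, 1 + a^t ≥ b^t + c^t. -/
/-! For odd `t` the map `x ↦ x ^ t` is increasing, so we may replace `a` by `max (b + c - 1) (-1)`
and assume `c ≤ b`. If `b + c ≤ 0` then `c ^ t ≤ -b ^ t` and both sides are compared with `0`.
Otherwise `|c| ≤ b`, and with `d = b + c - 1` the claim reads `c ^ t - d ^ t ≤ 1 - b ^ t`, where
`c - d = 1 - b`; factoring both differences as geometric sums, the terms `c ^ i d ^ (t-1-i)` are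
dominated by `b ^ i 1 ^ (t-1-i)`. -/

open Finset

variable {R : Type*} [CommRing R] [LinearOrder R] [IsStrictOrderedRing R]

theorem pow_sub_pow_le_pow_sub_pow_of_abs_le {x y u v : R} (hx : |x| ≤ u) (hy : |y| ≤ v)
    (hyx : y ≤ x) (hxy : x - y ≤ v - u) (n : ℕ) : x ^ n - y ^ n ≤ v ^ n - u ^ n := by
  have hu : 0 ≤ u := (abs_nonneg x).trans hx
  have hv : 0 ≤ v := (abs_nonneg y).trans hy
  have hterm (i : ℕ) : x ^ i * y ^ (n - 1 - i) ≤ u ^ i * v ^ (n - 1 - i) :=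
    calc x ^ i * y ^ (n - 1 - i) ≤ |x| ^ i * |y| ^ (n - 1 - i) := by
          rw [← abs_pow, ← abs_pow, ← abs_mul]; exact le_abs_self _
      _ ≤ u ^ i * v ^ (n - 1 - i) := by gcongr
  calc x ^ n - y ^ n = (∑ i ∈ range n, x ^ i * y ^ (n - 1 - i)) * (x - y) :=
        (geom_sum₂_mul x y n).symm
    _ ≤ (∑ i ∈ range n, u ^ i * v ^ (n - 1 - i)) * (v - u) := by
        refine mul_le_mul (sum_le_sum fun i _ ↦ hterm i) hxy (sub_nonneg.mpr hyx) ?_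
        positivity
    _ = v ^ n - u ^ n := by
        rw [← geom_sum₂_comm, geom_sum₂_mul]

theorem pow_add_pow_le_one_add_pow_of_le {a b c : R} {t : ℕ} (ht : Odd t) (ha : -1 ≤ a)
    (hb : b ≤ 1) (hcb : c ≤ b) (habc : b + c ≤ 1 + a) : b ^ t + c ^ t ≤ 1 + a ^ t := by
  have ha_pow : -1 ≤ a ^ t := by simpa [ht.neg_one_pow] using ht.pow_le_pow.mpr ha
  rcases le_total (b + c) 0 with hbc | hbc
  · have hc_pow : c ^ t ≤ -b ^ t := by
      simpa [ht.neg_pow] using ht.pow_le_pow.mpr (show c ≤ -b by linarith)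
    linarith
  · have hd : b + c - 1 ≤ a := by linarith
    have key : c ^ t - (b + c - 1) ^ t ≤ 1 ^ t - b ^ t :=
      pow_sub_pow_le_pow_sub_pow_of_abs_le (abs_le.mpr ⟨by linarith, hcb⟩)
        (abs_le.mpr ⟨by linarith, by linarith⟩) (by linarith) (by linarith) t
    have := ht.pow_le_pow.mpr hd
    rw [one_pow] at key
    linarith

theorem stmt_0_general (a b c : ℝ) (ha : -1 ≤ a) (hb' : b ≤ 1)
    (hc' : c ≤ 1) (habc : 1 + a ≥ b + c)
    (t : ℕ) (ht : Odd t) :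
    1 + a ^ t ≥ b ^ t + c ^ t := by
  rcases le_total c b with hcb | hbc
  · exact pow_add_pow_le_one_add_pow_of_le ht ha hb' hcb habc
  · rw [add_comm (b ^ t)]
    exact pow_add_pow_le_one_add_pow_of_le ht ha hc' hbc (by linarith)

theorem stmt_0 (a b c : ℝ) (ha : -1 ≤ a) (ha' : a ≤ 1) (hb : -1 ≤ b) (hb' : b ≤ 1)
    (hc : -1 ≤ c) (hc' : c ≤ 1) (habc : 1 + a ≥ b + c)
    (t : ℕ) (ht : Odd t) (htpos : 0 < t) :
    1 + a ^ t ≥ b ^ t + c ^ t :=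
  stmt_0_general a b c ha hb' hc' habc t ht
end

section
/- Let η, λ and θ₁,…,θ_N be non-negative reals with ∑_{i=1}^N θ_i² ≤ 1 and η ≤ θ_i ≤ λ for all i. Then ∑_{i=1}^N ((θ_i + η)^8 − θ_i^8) ≤ ∑_{l=1}^{6} C(8,l) λ^{6−l} η^l + 9 η^6. -/
open Finset

/- Expand `(η + θ) ^ (n + 2)` binomially. The terms `η ^ l θ ^ (n + 2 - l)` with `1 ≤ l ≤ n` keep a
factor `θ ^ 2` and bound `θ ^ (n - l) ≤ lam ^ (n - l)`; the two top terms `(n + 2) η ^ (n + 1) θ` and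
`η ^ (n + 2)` are bounded using `η ≤ θ`, which gives the coefficient `n + 3` of `η ^ n`. -/
theorem add_pow_sub_pow_le_mul_sq {n : ℕ} {η lam θ : ℝ} (hη : 0 ≤ η) (hηθ : η ≤ θ)
    (hθlam : θ ≤ lam) :
    (θ + η) ^ (n + 2) - θ ^ (n + 2) ≤
      ((∑ l ∈ Icc 1 n, (Nat.choose (n + 2) l : ℝ) * lam ^ (n - l) * η ^ l) + (n + 3) * η ^ n) *
        θ ^ 2 := by
  have hθ : 0 ≤ θ := hη.trans hηθ
  have hrange : range (n + 1) = insert 0 (Icc 1 n) := by ext; simp; omega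
  rw [add_comm θ η, add_pow, sum_range_succ, sum_range_succ, hrange, sum_insert (by simp)]
  simp only [pow_zero, Nat.sub_zero, one_mul, Nat.choose_zero_right, Nat.cast_one, mul_one,
    Nat.choose_succ_self_right, Nat.choose_self, Nat.sub_self,
    show n + 2 - (n + 1) = 1 by omega, pow_one, Nat.cast_add]
  have hmiddle : ∑ l ∈ Icc 1 n, η ^ l * θ ^ (n + 2 - l) * (Nat.choose (n + 2) l : ℝ) ≤
      ∑ l ∈ Icc 1 n, (Nat.choose (n + 2) l : ℝ) * lam ^ (n - l) * η ^ l * θ ^ 2 := by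
    refine sum_le_sum fun l hl => ?_
    have hexp : n + 2 - l = (n - l) + 2 := by simp at hl; omega
    rw [hexp, pow_add]
    have := pow_le_pow_left₀ hθ hθlam (n - l)
    have : 0 ≤ η ^ l * θ ^ 2 * (Nat.choose (n + 2) l : ℝ) := by positivity
    nlinarith
  have hnext : η ^ (n + 1) * θ ≤ η ^ n * θ ^ 2 := by
    rw [pow_succ, sq, mul_assoc]
    exact mul_le_mul_of_nonneg_left (mul_le_mul_of_nonneg_right hηθ hθ) (by positivity)
  have htop : η ^ (n + 2) ≤ η ^ n * θ ^ 2 := by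
    rw [pow_add]
    exact mul_le_mul_of_nonneg_left (pow_le_pow_left₀ hη hηθ 2) (by positivity)
  have hnext_scaled := mul_le_mul_of_nonneg_right hnext (by positivity : (0 : ℝ) ≤ n + 2)
  rw [add_mul, sum_mul]
  linarith

theorem stmt_1_general (N : ℕ) (η lam : ℝ) (θ : Fin N → ℝ)
    (hη : 0 ≤ η) (hlam : 0 ≤ lam)
    (hsum : ∑ i, θ i ^ 2 ≤ 1)
    (hlb : ∀ i, η ≤ θ i) (hub : ∀ i, θ i ≤ lam) :
    ∑ i, ((θ i + η) ^ 8 - θ i ^ 8) ≤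
      (∑ l ∈ Finset.Icc 1 6, (Nat.choose 8 l : ℝ) * lam ^ (6 - l) * η ^ l) + 9 * η ^ 6 := by
  set K := (∑ l ∈ Finset.Icc 1 6, (Nat.choose 8 l : ℝ) * lam ^ (6 - l) * η ^ l) + 9 * η ^ 6
  have hK : 0 ≤ K := by positivity
  calc ∑ i, ((θ i + η) ^ 8 - θ i ^ 8)
      ≤ ∑ i, K * θ i ^ 2 := sum_le_sum fun i _ => by
        have := add_pow_sub_pow_le_mul_sq (n := 6) hη (hlb i) (hub i)
        norm_num at this ⊢
        linarith
    _ = K * ∑ i, θ i ^ 2 := (mul_sum ..).symm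
    _ ≤ K := mul_le_of_le_one_right hK hsum

theorem stmt_1 (N : ℕ) (hN : 0 < N) (η lam : ℝ) (θ : Fin N → ℝ)
    (hη : 0 ≤ η) (hlam : 0 ≤ lam)
    (hsum : ∑ i, θ i ^ 2 ≤ 1)
    (hlb : ∀ i, η ≤ θ i) (hub : ∀ i, θ i ≤ lam) :
    ∑ i, ((θ i + η) ^ 8 - θ i ^ 8) ≤
      (∑ l ∈ Finset.Icc 1 6, (Nat.choose 8 l : ℝ) * lam ^ (6 - l) * η ^ l) + 9 * η ^ 6 :=
  stmt_1_general N η lam θ hη hlam hsum hlb hub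
end

section
/- Let S ⊆ {−1,1}^N have relative size 1/N and let 0 < η < 1/2. If x is uniform on {−1,1}^N and y is obtained from x by flipping each bit independently with probability η, then Pr[y ∈ S | x ∈ S] ≤ N^{−(η+η²)}. -/
/-!
Put `p = 2 - 2η`, so that the noise correlation is `1 - 2η = p - 1`. Bonami's two-point
inequality `((x+y)/2)² + (p-1)((x-y)/2)² ≤ ((xᵖ+yᵖ)/2)^(2/p)` is hypercontractivity
`‖T_√(p-1) f‖₂ ≤ ‖f‖_p` on one bit; after scaling to `x, y = 1 ± ε` it follows from
`(1+ε)ᵖ + (1-ε)ᵖ ≥ 2 + p(p-1)ε²` (differentiate twice) and Bernoulli's inequality.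
With Cauchy–Schwarz it gives the bilinear form `⟨f, T_(p-1) g⟩ ≤ ‖f‖_p ‖g‖_p`, which
tensorizes over the coordinates. For `f = g = 1_S` this reads
`Pr[x ∈ S, y ∈ S] ≤ (|S|/2^N)^(2/p) = N^(-2/p)`, hence
`Pr[y ∈ S | x ∈ S] ≤ N^(1-2/p) = N^(-η/(1-η)) ≤ N^(-(η+η²))`.
-/

open Real Finset

theorem two_le_one_add_rpow_add_one_sub_rpow {r e : ℝ} (hr : r ≤ 0) (he : |e| < 1) :
    2 ≤ (1 + e) ^ r + (1 - e) ^ r := by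
  obtain ⟨he₁, he₂⟩ := abs_lt.mp he
  have hprod : 1 ≤ (1 + e) ^ r * (1 - e) ^ r := by
    rw [← mul_rpow (by linarith) (by linarith)]
    exact one_le_rpow_of_pos_of_le_one_of_nonpos (by nlinarith) (by nlinarith [sq_nonneg e]) hr
  nlinarith [sq_nonneg ((1 + e) ^ r - (1 - e) ^ r), rpow_pos_of_pos (by linarith : 0 < 1 + e) r,
    rpow_pos_of_pos (by linarith : 0 < 1 - e) r]

theorem two_mul_mul_le_one_add_rpow_sub_one_sub_rpow {q e : ℝ} (hq₀ : 0 ≤ q) (hq₁ : q ≤ 1)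
    (he₀ : 0 ≤ e) (he₁ : e ≤ 1) :
    2 * q * e ≤ (1 + e) ^ q - (1 - e) ^ q := by
  let k : ℝ → ℝ := fun e ↦ (1 + e) ^ q - (1 - e) ^ q - 2 * q * e
  have hk : ∀ e ∈ Set.Ioo (0 : ℝ) 1,
      HasDerivAt k (q * ((1 + e) ^ (q - 1) + (1 - e) ^ (q - 1) - 2)) e := by
    rintro e ⟨he₀, he₁⟩
    have hplus := ((hasDerivAt_id' e).const_add 1).rpow_const (p := q) (Or.inl (by simp; linarith))
    have hminus := ((hasDerivAt_id' e).const_sub 1).rpow_const (p := q) (Or.inl (by simp; linarith))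
    exact ((hplus.sub hminus).sub ((hasDerivAt_id' e).const_mul (2 * q))).congr_deriv (by ring)
  have hmono : MonotoneOn k (Set.Icc 0 1) := by
    refine monotoneOn_of_hasDerivWithinAt_nonneg (convex_Icc 0 1) ?_
      (fun e he ↦ (hk e (by simpa using he)).hasDerivWithinAt) fun e he ↦ ?_
    · exact ((continuous_rpow_const hq₀).comp (by fun_prop) |>.sub
        ((continuous_rpow_const hq₀).comp (by fun_prop)) |>.sub (by fun_prop)).continuousOn
    · rw [interior_Icc] at he
      have := two_le_one_add_rpow_add_one_sub_rpow (r := q - 1) (by linarith)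
        (abs_lt.mpr ⟨by linarith [he.1], he.2⟩)
      exact mul_nonneg hq₀ (by linarith)
  have := hmono (Set.left_mem_Icc.mpr zero_le_one) ⟨he₀, he₁⟩ he₀
  simp only [k] at this
  norm_num at this
  linarith

theorem two_add_mul_sq_le_one_add_rpow_add_one_sub_rpow {p e : ℝ} (hp₁ : 1 ≤ p) (hp₂ : p ≤ 2)
    (he : |e| ≤ 1) :
    2 + p * (p - 1) * e ^ 2 ≤ (1 + e) ^ p + (1 - e) ^ p := by
  wlog he₀ : 0 ≤ e generalizing e
  · have := this (e := -e) (by simpa using he) (by linarith)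
    rwa [neg_sq, ← sub_eq_add_neg, sub_neg_eq_add, add_comm ((1 - e) ^ p)] at this
  let g : ℝ → ℝ := fun e ↦ (1 + e) ^ p + (1 - e) ^ p - p * (p - 1) * e ^ 2
  have hg : ∀ e,
      HasDerivAt g (p * ((1 + e) ^ (p - 1) - (1 - e) ^ (p - 1)) - 2 * p * (p - 1) * e) e := by
    intro e
    have hplus := ((hasDerivAt_id' e).const_add 1).rpow_const (p := p) (Or.inr hp₁)
    have hminus := ((hasDerivAt_id' e).const_sub 1).rpow_const (p := p) (Or.inr hp₁)
    exact ((hplus.add hminus).sub ((hasDerivAt_pow 2 e).const_mul (p * (p - 1)))).congr_deriv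
      (by ring)
  have hmono : MonotoneOn g (Set.Icc 0 1) := by
    refine monotoneOn_of_hasDerivWithinAt_nonneg (convex_Icc 0 1)
      (fun e _ ↦ (hg e).continuousAt.continuousWithinAt)
      (fun e _ ↦ (hg e).hasDerivWithinAt) fun e he ↦ ?_
    rw [interior_Icc] at he
    have := two_mul_mul_le_one_add_rpow_sub_one_sub_rpow (q := p - 1) (by linarith) (by linarith)
      he.1.le he.2.le
    nlinarith
  have := hmono (Set.left_mem_Icc.mpr zero_le_one) ⟨he₀, (abs_le.mp he).2⟩ he₀
  simp only [g] at this
  norm_num at this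
  linarith

theorem sq_add_mul_sq_le_rpow_two_div {p x y : ℝ} (hp₁ : 1 ≤ p) (hp₂ : p ≤ 2)
    (hx : 0 ≤ x) (hy : 0 ≤ y) :
    ((x + y) / 2) ^ 2 + (p - 1) * ((x - y) / 2) ^ 2 ≤ ((x ^ p + y ^ p) / 2) ^ (2 / p) := by
  have hp₀ : 0 < p := by linarith
  rcases (add_nonneg hx hy).eq_or_lt with hxy | hxy
  · obtain ⟨rfl, rfl⟩ : x = 0 ∧ y = 0 := ⟨by linarith, by linarith⟩
    norm_num [zero_rpow hp₀.ne', zero_rpow (div_pos two_pos hp₀).ne']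
  set μ := (x + y) / 2
  set ε := (x - y) / (x + y)
  have hμ : 0 < μ := by positivity
  have hε : |ε| ≤ 1 := abs_le.mpr
    ⟨by rw [le_div_iff₀ hxy]; linarith, by rw [div_le_one hxy]; linarith⟩
  obtain ⟨hε₁, hε₂⟩ := abs_le.mp hε
  have hs : 0 ≤ p * (p - 1) / 2 * ε ^ 2 :=
    mul_nonneg (div_nonneg (mul_nonneg hp₀.le (sub_nonneg.mpr hp₁)) zero_le_two) (sq_nonneg ε)
  have hmean : μ ^ p * (1 + p * (p - 1) / 2 * ε ^ 2) ≤ (x ^ p + y ^ p) / 2 := by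
    have hx' : x = μ * (1 + ε) := by simp only [μ, ε]; field_simp; ring
    have hy' : y = μ * (1 - ε) := by simp only [μ, ε]; field_simp; ring
    rw [hx', hy', mul_rpow hμ.le (by linarith), mul_rpow hμ.le (by linarith)]
    nlinarith [two_add_mul_sq_le_one_add_rpow_add_one_sub_rpow hp₁ hp₂ hε, rpow_pos_of_pos hμ p]
  have hbernoulli : 1 + (p - 1) * ε ^ 2 ≤ (1 + p * (p - 1) / 2 * ε ^ 2) ^ (2 / p) := by
    have := one_add_mul_self_le_rpow_one_add (s := p * (p - 1) / 2 * ε ^ 2) (by linarith)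
      (p := 2 / p) (by rw [le_div_iff₀ hp₀]; linarith)
    convert this using 2
    field_simp
  have hμε : μ * ε = (x - y) / 2 := by simp only [μ, ε]; field_simp
  calc ((x + y) / 2) ^ 2 + (p - 1) * ((x - y) / 2) ^ 2 = μ ^ 2 * (1 + (p - 1) * ε ^ 2) := by
        rw [← hμε]; ring
    _ ≤ μ ^ 2 * (1 + p * (p - 1) / 2 * ε ^ 2) ^ (2 / p) := by gcongr
    _ = (μ ^ p * (1 + p * (p - 1) / 2 * ε ^ 2)) ^ (2 / p) := by
        rw [mul_rpow (by positivity) (by linarith), ← rpow_mul hμ.le, mul_div_cancel₀ _ hp₀.ne',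
          rpow_two]
    _ ≤ ((x ^ p + y ^ p) / 2) ^ (2 / p) := by gcongr

theorem mul_add_mul_mul_le_rpow_mul_rpow {p a b c d : ℝ} (hp₁ : 1 ≤ p) (hp₂ : p ≤ 2)
    (ha : 0 ≤ a) (hb : 0 ≤ b) (hc : 0 ≤ c) (hd : 0 ≤ d) :
    (a + b) / 2 * ((c + d) / 2) + (p - 1) * ((a - b) / 2 * ((c - d) / 2))
      ≤ ((a ^ p + b ^ p) / 2) ^ (1 / p) * ((c ^ p + d ^ p) / 2) ^ (1 / p) := by
  have hp₀ : 0 < p := by linarith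
  have hsq : ∀ z : ℝ, 0 ≤ z → (z ^ (1 / p)) ^ 2 = z ^ (2 / p) := fun z hz ↦ by
    rw [← rpow_natCast, ← rpow_mul hz]; ring_nf
  have hf := sq_add_mul_sq_le_rpow_two_div hp₁ hp₂ ha hb
  have hg := sq_add_mul_sq_le_rpow_two_div hp₁ hp₂ hc hd
  rw [← hsq _ (by positivity)] at hf hg
  set X := ((a ^ p + b ^ p) / 2) ^ (1 / p)
  set Y := ((c ^ p + d ^ p) / 2) ^ (1 / p)
  have hX : 0 ≤ X := by positivity
  have hY : 0 ≤ Y := by positivity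
  have hρ : 0 ≤ p - 1 := by linarith
  -- Cauchy–Schwarz for the form `u v + (p - 1) s t`
  nlinarith [mul_nonneg hρ (sq_nonneg ((a + b) / 2 * ((c - d) / 2) - (a - b) / 2 * ((c + d) / 2))),
    mul_le_mul hf hg (by positivity) (sq_nonneg X), mul_nonneg hX hY]

-- With counting rather than uniform measure on `Bool` the constant is `2 ^ (1 - 2 / p)`.
theorem sum_sum_mul_noise_le {η : ℝ} (hη₀ : 0 ≤ η) (hη₁ : η ≤ 1 / 2) {f g : Bool → ℝ}
    (hf : ∀ a, 0 ≤ f a) (hg : ∀ b, 0 ≤ g b) :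
    ∑ a, ∑ b, f a * g b * (if a = b then 1 - η else η)
      ≤ 2 ^ (1 - 2 / (2 - 2 * η)) * (∑ a, f a ^ (2 - 2 * η)) ^ (1 / (2 - 2 * η))
        * (∑ b, g b ^ (2 - 2 * η)) ^ (1 / (2 - 2 * η)) := by
  set p := 2 - 2 * η with hp
  have hp₀ : 0 < p := by linarith
  have key := mul_add_mul_mul_le_rpow_mul_rpow (p := p) (by linarith) (by linarith)
    (hf true) (hf false) (hg true) (hg false)
  have htwo : ∀ z : ℝ, 0 ≤ z → (z / 2) ^ (1 / p) = z ^ (1 / p) / 2 ^ (1 / p) := fun z hz ↦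
    div_rpow hz zero_le_two _
  have hpow : (2 : ℝ) ^ (1 - 2 / p) = 2 / (2 ^ (1 / p) * 2 ^ (1 / p)) := by
    rw [← rpow_add two_pos, rpow_sub two_pos, rpow_one]; ring_nf
  rw [htwo _ (add_nonneg (rpow_nonneg (hf _) _) (rpow_nonneg (hf _) _)),
    htwo _ (add_nonneg (rpow_nonneg (hg _) _) (rpow_nonneg (hg _) _))] at key
  simp only [Fintype.sum_bool, if_true, if_false, Bool.true_eq_false, Bool.false_eq_true, hpow]
  have : (0 : ℝ) < 2 ^ (1 / p) := by positivity
  field_simp at key ⊢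
  linarith

theorem Fin.sum_univ_pi_cons {α M : Type*} [Fintype α] [AddCommMonoid M] (n : ℕ)
    (F : (Fin (n + 1) → α) → M) :
    ∑ x, F x = ∑ a, ∑ z : Fin n → α, F (Fin.cons a z) := by
  rw [← (Fin.consEquiv fun _ ↦ α).sum_comp, Fintype.sum_prod_type]
  rfl

theorem sum_sum_mul_prod_le_pow_mul {α : Type*} [Fintype α] {k : α → α → ℝ}
    (hk : ∀ a b, 0 ≤ k a b) {p C : ℝ} (hp : 0 < p) (hC : 0 ≤ C)
    (h : ∀ f g : α → ℝ, (∀ a, 0 ≤ f a) → (∀ b, 0 ≤ g b) →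
      ∑ a, ∑ b, f a * g b * k a b ≤ C * (∑ a, f a ^ p) ^ (1 / p) * (∑ b, g b ^ p) ^ (1 / p))
    (n : ℕ) {f g : (Fin n → α) → ℝ} (hf : ∀ x, 0 ≤ f x) (hg : ∀ y, 0 ≤ g y) :
    ∑ x, ∑ y, f x * g y * ∏ i, k (x i) (y i)
      ≤ C ^ n * (∑ x, f x ^ p) ^ (1 / p) * (∑ y, g y ^ p) ^ (1 / p) := by
  induction n with
  | zero =>
    simp [one_div, rpow_rpow_inv (hf _) hp.ne', rpow_rpow_inv (hg _) hp.ne']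
  | succ n ih =>
    let P a := ∑ z, f (Fin.cons a z) ^ p
    let Q b := ∑ w, g (Fin.cons b w) ^ p
    have hP a : 0 ≤ P a := sum_nonneg fun z _ ↦ rpow_nonneg (hf _) p
    have hQ b : 0 ≤ Q b := sum_nonneg fun w _ ↦ rpow_nonneg (hg _) p
    have hsplit : ∑ x, ∑ y, f x * g y * ∏ i, k (x i) (y i) = ∑ a, ∑ b, k a b *
        ∑ z, ∑ w, f (Fin.cons a z) * g (Fin.cons b w) * ∏ i, k (z i) (w i) := by
      simp only [Fin.sum_univ_pi_cons n, Fin.prod_univ_succ, Fin.cons_zero, Fin.cons_succ,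
        mul_sum]
      refine sum_congr rfl fun a _ ↦ ?_
      rw [sum_comm]
      exact sum_congr rfl fun b _ ↦ sum_congr rfl fun z _ ↦ sum_congr rfl fun w _ ↦ by ring
    calc ∑ x, ∑ y, f x * g y * ∏ i, k (x i) (y i)
        ≤ ∑ a, ∑ b, k a b * (C ^ n * P a ^ (1 / p) * Q b ^ (1 / p)) := by
          rw [hsplit]
          gcongr with a _ b _
          · exact hk a b
          · exact ih (fun z ↦ hf _) fun w ↦ hg _
      _ = C ^ n * ∑ a, ∑ b, P a ^ (1 / p) * Q b ^ (1 / p) * k a b := by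
          simp only [mul_sum]
          exact sum_congr rfl fun a _ ↦ sum_congr rfl fun b _ ↦ by ring
      _ ≤ C ^ n * (C * (∑ a, P a) ^ (1 / p) * (∑ b, Q b) ^ (1 / p)) := by
          gcongr
          have hPp a : (P a ^ (1 / p)) ^ p = P a := by rw [one_div, rpow_inv_rpow (hP a) hp.ne']
          have hQp b : (Q b ^ (1 / p)) ^ p = Q b := by rw [one_div, rpow_inv_rpow (hQ b) hp.ne']
          simpa only [hPp, hQp] using
            h _ _ (fun a ↦ rpow_nonneg (hP a) (1 / p)) fun b ↦ rpow_nonneg (hQ b) (1 / p)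
      _ = C ^ (n + 1) * (∑ x, f x ^ p) ^ (1 / p) * (∑ y, g y ^ p) ^ (1 / p) := by
          rw [Fin.sum_univ_pi_cons n (fun x ↦ f x ^ p), Fin.sum_univ_pi_cons n (fun y ↦ g y ^ p)]
          ring

theorem sum_sum_prod_noise_le {η : ℝ} (hη₀ : 0 ≤ η) (hη₁ : η ≤ 1 / 2) {n : ℕ}
    (S : Finset (Fin n → Bool)) :
    ∑ x ∈ S, ∑ y ∈ S, ∏ i, (if x i = y i then 1 - η else η)
      ≤ (2 ^ (1 - 2 / (2 - 2 * η))) ^ n * (S.card : ℝ) ^ (2 / (2 - 2 * η)) := by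
  set p := 2 - 2 * η
  have hp : 0 < p := by linarith
  let f : (Fin n → Bool) → ℝ := fun x ↦ if x ∈ S then 1 else 0
  have hf x : 0 ≤ f x := by simp only [f]; split_ifs <;> norm_num
  have hbound := sum_sum_mul_prod_le_pow_mul (fun a b ↦ by split_ifs <;> linarith) hp
    (by positivity) (fun f g hf hg ↦ sum_sum_mul_noise_le hη₀ hη₁ hf hg) n hf hf
  have hcorr : ∑ x, ∑ y, f x * f y * ∏ i, (if x i = y i then 1 - η else η)
      = ∑ x ∈ S, ∑ y ∈ S, ∏ i, (if x i = y i then 1 - η else η) := by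
    simp only [f, ite_mul, one_mul, zero_mul, sum_ite_irrel, sum_const_zero, sum_ite_mem_eq]
  have hnorm : ∑ x, f x ^ p = S.card := by
    simp [f, apply_ite (· ^ p), zero_rpow hp.ne']
  rwa [hcorr, hnorm, mul_assoc, ← rpow_add' (Nat.cast_nonneg _) (by positivity), ← add_div,
    one_add_one_eq_two] at hbound

theorem stmt_8 (N : ℕ) (hN : 0 < N) (S : Finset (Fin N → Bool))
    (hS : (S.card : ℝ) * N = 2 ^ N)
    (η : ℝ) (hη : 0 < η) (hη' : η < 1 / 2) :
    -- `Pr[y ∈ S | x ∈ S] = N · Pr[x ∈ S ∧ y ∈ S]` since `Pr[x ∈ S] = 1/N`,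
    -- where the joint density of the η-noisy pair `(x,y)` is
    -- `2^{-N} ∏ᵢ ((1-η) if xᵢ = yᵢ else η)`.
    (N : ℝ) * ∑ x ∈ S, ∑ y ∈ S,
        (1 / (2 : ℝ) ^ N) * ∏ i, (if x i = y i then 1 - η else η)
      ≤ (N : ℝ) ^ (-(η + η ^ 2)) := by
  set p := 2 - 2 * η
  have hp : 0 < p := by linarith
  have hN' : (0 : ℝ) < N := by exact_mod_cast hN
  have hM : (0 : ℝ) < 2 ^ N := by positivity
  have hcard : (S.card : ℝ) = 2 ^ N / N := by rw [eq_div_iff hN'.ne', hS]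
  have hexp : 1 - 2 / p ≤ -(η + η ^ 2) := by
    have : 1 + (η + η ^ 2) ≤ 2 / p := by rw [le_div_iff₀ hp]; nlinarith
    linarith
  calc (N : ℝ) * ∑ x ∈ S, ∑ y ∈ S, (1 / (2 : ℝ) ^ N) * ∏ i, (if x i = y i then 1 - η else η)
      = N / 2 ^ N * ∑ x ∈ S, ∑ y ∈ S, ∏ i, (if x i = y i then 1 - η else η) := by
        simp only [← mul_sum]; ring
    _ ≤ N / 2 ^ N * ((2 ^ (1 - 2 / p)) ^ N * (S.card : ℝ) ^ (2 / p)) := by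
        gcongr; exact sum_sum_prod_noise_le hη.le hη'.le S
    _ = N ^ (1 - 2 / p) := by
        have : (0 : ℝ) < (2 ^ N) ^ (2 / p) := by positivity
        have : (0 : ℝ) < N ^ (2 / p) := by positivity
        rw [hcard, rpow_pow_comm zero_le_two, div_rpow hM.le hN'.le, rpow_sub hM, rpow_sub hN',
          rpow_one, rpow_one]
        field_simp
    _ ≤ N ^ (-(η + η ^ 2)) := rpow_le_rpow_of_exponent_le (Nat.one_le_cast.mpr hN) hexp
end

section
/- Let {v_i}_{i=1}^N and {w_j}_{j=1}^N be orthonormal bases of ℝ^N such that ⟨v_i, w_i⟩ = 1−η for all i (0 ≤ η ≤ 1), and let x, y ∈ {−1,1}^N. Define V = (1/√N)∑_i x_i v_i^{⊗8} and W = (1/√N)∑_i y_i w_i^{⊗8}. Then (1−η)^8 (1 − 2Δ(x,y)) − (2η)^4 ≤ ⟨V, W⟩ ≤ (1−η)^8 (1 − 2Δ(x,y)) + (2η)^4, where Δ(x,y) is the fraction of coordinates where x and y differ. -/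
/-!
Expanding both tensor sums coordinatewise gives
`⟨V, W⟩ = (1/N) ∑_{i,j} x_i y_j ⟨v_i, w_j⟩^8`. The diagonal terms sum to `(1-η)^8 (1 - 2Δ(x,y))`.
In row `i`, Bessel's inequality bounds the off-diagonal squares by
`∑_{j ≠ i} ⟨v_i, w_j⟩² ≤ 1 - (1-η)² ≤ 2η`, and a sum of fourth powers of nonnegative numbers is at
most the fourth power of their sum, so each row's off-diagonal part is at most `(2η)^4` in absolute
value.
-/

open scoped RealInnerProductSpace
open Finset

theorem sum_prod_mul_prod_eq_sum_mul_pow {R ι : Type*} [CommSemiring R] [Fintype ι] (m : ℕ)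
    (a b : ι → R) :
    ∑ k : Fin m → ι, (∏ j, a (k j)) * ∏ j, b (k j) = (∑ i, a i * b i) ^ m := by
  simp_rw [← prod_mul_distrib]
  rw [sum_pow', Fintype.piFinset_univ]

theorem EuclideanSpace.sum_prod_mul_prod_eq_inner_pow {ι : Type*} [Fintype ι] (m : ℕ)
    (u u' : EuclideanSpace ℝ ι) :
    ∑ k : Fin m → ι, (∏ j, u (k j)) * ∏ j, u' (k j) = ⟪u, u'⟫ ^ m := by
  rw [sum_prod_mul_prod_eq_sum_mul_pow, PiLp.inner_apply]
  simp [mul_comm]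

theorem sum_lincomb_tensorPow_mul_eq {ι κ : Type*} [Fintype ι] [Fintype κ] (m : ℕ) (c : ℝ)
    (x y : κ → ℝ) (v w : κ → EuclideanSpace ℝ ι) :
    ∑ k : Fin m → ι, (c * ∑ i, x i * ∏ j, v i (k j)) * (c * ∑ i, y i * ∏ j, w i (k j)) =
      c ^ 2 * ∑ i, ∑ i', x i * y i' * ⟪v i, w i'⟫ ^ m := by
  calc _ = c ^ 2 * ∑ k : Fin m → ι, (∑ i, x i * ∏ j, v i (k j)) * ∑ i, y i * ∏ j, w i (k j) := by
        rw [Finset.mul_sum]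
        exact sum_congr rfl fun k _ => by ring
    _ = _ := by
        simp_rw [Finset.sum_mul_sum, ← EuclideanSpace.sum_prod_mul_prod_eq_inner_pow,
          Finset.mul_sum]
        rw [Finset.sum_comm]
        refine sum_congr rfl fun i _ => ?_
        rw [Finset.sum_comm]
        exact sum_congr rfl fun i' _ => sum_congr rfl fun k _ => by ring

theorem Finset.sum_pow_le_pow_sum {ι : Type*} {s : Finset ι} {f : ι → ℝ}
    (hf : ∀ i ∈ s, 0 ≤ f i) {n : ℕ} (hn : n ≠ 0) :
    ∑ i ∈ s, f i ^ n ≤ (∑ i ∈ s, f i) ^ n := by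
  obtain ⟨n, rfl⟩ := Nat.exists_eq_succ_of_ne_zero hn
  calc ∑ i ∈ s, f i ^ (n + 1) ≤ ∑ i ∈ s, (∑ j ∈ s, f j) ^ n * f i := by
        refine sum_le_sum fun i hi => ?_
        rw [pow_succ]
        exact mul_le_mul_of_nonneg_right (pow_le_pow_left₀ (hf i hi) (single_le_sum hf hi) n)
          (hf i hi)
    _ = (∑ i ∈ s, f i) ^ (n + 1) := by rw [← mul_sum, pow_succ]

theorem Orthonormal.sum_erase_inner_sq_le {E ι : Type*} [NormedAddCommGroup E]
    [InnerProductSpace ℝ E] [DecidableEq ι] {w : ι → E} (hw : Orthonormal ℝ w) (u : E)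
    {s : Finset ι} {i : ι} (hi : i ∈ s) :
    ∑ j ∈ s.erase i, ⟪u, w j⟫ ^ 2 ≤ ‖u‖ ^ 2 - ⟪u, w i⟫ ^ 2 := by
  have hbessel := hw.sum_inner_products_le u (s := s)
  simp only [Real.norm_eq_abs, sq_abs, real_inner_comm u] at hbessel
  rw [← add_sum_erase s _ hi] at hbessel
  linarith

theorem sum_mul_eq_card_sub_two_mul_card_ne {ι : Type*} [Fintype ι] {x y : ι → ℝ}
    (hx : ∀ i, x i = 1 ∨ x i = -1) (hy : ∀ i, y i = 1 ∨ y i = -1) :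
    ∑ i, x i * y i = Fintype.card ι - 2 * ((univ.filter fun i => x i ≠ y i).card : ℝ) := by
  have hxy : ∀ i, x i * y i = 1 - 2 * if x i ≠ y i then 1 else 0 := fun i => by
    rcases hx i with h | h <;> rcases hy i with h' | h' <;> norm_num [h, h']
  simp_rw [hxy, sum_sub_distrib, ← mul_sum, sum_boole]
  simp

theorem Orthonormal.abs_sum_erase_mul_inner_pow_le {E ι : Type*} [NormedAddCommGroup E]
    [InnerProductSpace ℝ E] [DecidableEq ι] {w : ι → E} (hw : Orthonormal ℝ w) {u : E}
    (hu : ‖u‖ = 1) {η : ℝ} (hη : 0 ≤ η) {s : Finset ι} {i : ι} (hi : i ∈ s)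
    (hclose : ⟪u, w i⟫ = 1 - η) {a : ι → ℝ} (ha : ∀ j, |a j| ≤ 1) {n : ℕ} (hn : n ≠ 0) :
    |∑ j ∈ s.erase i, a j * ⟪u, w j⟫ ^ (2 * n)| ≤ (2 * η) ^ n := by
  have hsq : ∑ j ∈ s.erase i, ⟪u, w j⟫ ^ 2 ≤ 2 * η := by
    have hbessel := hw.sum_erase_inner_sq_le u hi
    rw [hu, hclose] at hbessel
    nlinarith
  calc |∑ j ∈ s.erase i, a j * ⟪u, w j⟫ ^ (2 * n)|
      ≤ ∑ j ∈ s.erase i, (⟪u, w j⟫ ^ 2) ^ n := by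
        refine (abs_sum_le_sum_abs _ _).trans (sum_le_sum fun j _ => ?_)
        have hpow : 0 ≤ (⟪u, w j⟫ ^ 2) ^ n := pow_nonneg (sq_nonneg _) n
        rw [abs_mul, pow_mul, abs_of_nonneg hpow]
        exact mul_le_of_le_one_left hpow (ha j)
    _ ≤ (∑ j ∈ s.erase i, ⟪u, w j⟫ ^ 2) ^ n := sum_pow_le_pow_sum (fun j _ => sq_nonneg _) hn
    _ ≤ (2 * η) ^ n := pow_le_pow_left₀ (sum_nonneg fun j _ => sq_nonneg _) hsq n

theorem stmt_11_general (N : ℕ) (hN : 0 < N) (v w : Fin N → EuclideanSpace ℝ (Fin N))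
    (hv : Orthonormal ℝ v) (hw : Orthonormal ℝ w)
    (η : ℝ) (hη : 0 ≤ η)
    (hclose : ∀ i, ⟪v i, w i⟫ = 1 - η)
    (x y : Fin N → ℝ) (hx : ∀ i, x i = 1 ∨ x i = -1) (hy : ∀ i, y i = 1 ∨ y i = -1) :
    -- `⟨V, W⟩` where `V = (1/√N) ∑ᵢ xᵢ vᵢ^{⊗8}` and `W = (1/√N) ∑ᵢ yᵢ wᵢ^{⊗8}`,
    -- and `Δ(x,y)` is the fraction of coordinates where `x` and `y` differ.
    (1 - η) ^ 8 *
        (1 - 2 * (((Finset.univ.filter fun i => x i ≠ y i).card : ℝ) / N)) - (2 * η) ^ 4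
      ≤ (∑ k : Fin 8 → Fin N,
          ((1 / Real.sqrt N) * ∑ i, x i * ∏ j, v i (k j)) *
            ((1 / Real.sqrt N) * ∑ i, y i * ∏ j, w i (k j)))
    ∧ (∑ k : Fin 8 → Fin N,
          ((1 / Real.sqrt N) * ∑ i, x i * ∏ j, v i (k j)) *
            ((1 / Real.sqrt N) * ∑ i, y i * ∏ j, w i (k j)))
      ≤ (1 - η) ^ 8 *
          (1 - 2 * (((Finset.univ.filter fun i => x i ≠ y i).card : ℝ) / N)) + (2 * η) ^ 4 := by
  have hN' : (0 : ℝ) < N := by exact_mod_cast hN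
  have hxy : ∀ i j, |x i * y j| ≤ 1 := fun i j => by
    rcases hx i with h | h <;> rcases hy j with h' | h' <;> norm_num [h, h']
  set err : Fin N → ℝ := fun i => ∑ j ∈ univ.erase i, x i * y j * ⟪v i, w j⟫ ^ 8
  have hsplit : ∑ i, ∑ j, x i * y j * ⟪v i, w j⟫ ^ 8 =
      (1 - η) ^ 8 * ∑ i, x i * y i + ∑ i, err i := by
    rw [mul_sum, ← sum_add_distrib]
    refine sum_congr rfl fun i _ => ?_
    rw [← add_sum_erase _ _ (mem_univ i), hclose i]
    ring
  have hmean : |(N : ℝ)⁻¹ * ∑ i, err i| ≤ (2 * η) ^ 4 := by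
    rw [abs_mul, abs_inv, abs_of_pos hN', inv_mul_le_iff₀ hN']
    calc |∑ i, err i| ≤ ∑ i, |err i| := abs_sum_le_sum_abs _ _
      _ ≤ ∑ _i : Fin N, (2 * η) ^ 4 := sum_le_sum fun i _ =>
          hw.abs_sum_erase_mul_inner_pow_le (hv.1 i) hη (mem_univ i) (hclose i) (hxy i)
            four_ne_zero
      _ = N * (2 * η) ^ 4 := by simp
  rw [sum_lincomb_tensorPow_mul_eq, div_pow, one_pow, Real.sq_sqrt hN'.le, hsplit,
    sum_mul_eq_card_sub_two_mul_card_ne hx hy, Fintype.card_fin]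
  have hnormalize : ∀ d e : ℝ, 1 / (N : ℝ) * ((1 - η) ^ 8 * (N - 2 * d) + e) =
      (1 - η) ^ 8 * (1 - 2 * (d / N)) + (N : ℝ)⁻¹ * e := fun d e => by
    field_simp
  rw [hnormalize]
  obtain ⟨hlow, hhigh⟩ := abs_le.mp hmean
  constructor <;> linarith

theorem stmt_11 (N : ℕ) (hN : 0 < N) (v w : Fin N → EuclideanSpace ℝ (Fin N))
    (hv : Orthonormal ℝ v) (hw : Orthonormal ℝ w)
    (η : ℝ) (hη : 0 ≤ η) (hη1 : η ≤ 1)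
    (hclose : ∀ i, ⟪v i, w i⟫ = 1 - η)
    (x y : Fin N → ℝ) (hx : ∀ i, x i = 1 ∨ x i = -1) (hy : ∀ i, y i = 1 ∨ y i = -1) :
    -- `⟨V, W⟩` where `V = (1/√N) ∑ᵢ xᵢ vᵢ^{⊗8}` and `W = (1/√N) ∑ᵢ yᵢ wᵢ^{⊗8}`,
    -- and `Δ(x,y)` is the fraction of coordinates where `x` and `y` differ.
    (1 - η) ^ 8 *
        (1 - 2 * (((Finset.univ.filter fun i => x i ≠ y i).card : ℝ) / N)) - (2 * η) ^ 4
      ≤ (∑ k : Fin 8 → Fin N,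
          ((1 / Real.sqrt N) * ∑ i, x i * ∏ j, v i (k j)) *
            ((1 / Real.sqrt N) * ∑ i, y i * ∏ j, w i (k j)))
    ∧ (∑ k : Fin 8 → Fin N,
          ((1 / Real.sqrt N) * ∑ i, x i * ∏ j, v i (k j)) *
            ((1 / Real.sqrt N) * ∑ i, y i * ∏ j, w i (k j)))
      ≤ (1 - η) ^ 8 *
          (1 - 2 * (((Finset.univ.filter fun i => x i ≠ y i).card : ℝ) / N)) + (2 * η) ^ 4 :=
  stmt_11_general N hN v w hv hw η hη hclose x y hx hy
end

section
/- Let {v_i}_{i=1}^N and {w_j}_{j=1}^N be orthonormal bases of ℝ^N with max_{i,j} |⟨v_i, w_j⟩| = 1−β, and suppose the matching property ⟨v_{i₀⊕i}, w_{j₀⊕i}⟩ = ⟨v_{i₀}, w_{j₀}⟩ holds for all i (for the maximizing pair i₀, j₀, where ⊕ is the group operation of 𝔽₂^k with N = 2^k). Then for all sign vectors y, z ∈ {−1,1}^N, |(1/N) ∑_{i,j} y_i z_j ⟨v_i, w_j⟩^8| ≤ (1−β)^8 + (2β)^4. -/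
/-
Each row of the matrix `(⟪v i, w j⟫)` contains an entry of absolute value `1 - β`: the matching
property moves the maximizing pair `(i₀, j₀)` to row `i` by the translation `i₀ ⊕ i`. By Bessel's
inequality the squares of the remaining entries of the row sum to at most `1 - (1 - β)² ≤ 2β`,
so their eighth powers sum to at most `(2β)⁴`. Hence every row sum of eighth powers is at most
`(1 - β)⁸ + (2β)⁴`, and signs `y i z j = ±1` do not increase the absolute value of the average over the `2^k` rows.
-/

open scoped RealInnerProductSpace

/-- Coordinatewise XOR on `𝔽₂^k` modelled as `Fin k → Bool`. -/
def xorAdd {k : ℕ} (a b : Fin k → Bool) : Fin k → Bool := fun i => xor (a i) (b i)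

theorem xorAdd_cancel_left {k : ℕ} (a b : Fin k → Bool) : xorAdd a (xorAdd a b) = b := by
  funext t
  simp [xorAdd]

theorem Finset.sum_pow_le_pow_sum_of_nonneg {ι R : Type*} [CommSemiring R] [PartialOrder R]
    [IsOrderedRing R] {s : Finset ι} {f : ι → R} (hf : ∀ i ∈ s, 0 ≤ f i) {n : ℕ} (hn : n ≠ 0) :
    ∑ i ∈ s, f i ^ n ≤ (∑ i ∈ s, f i) ^ n := by
  obtain ⟨m, rfl⟩ := Nat.exists_eq_succ_of_ne_zero hn
  calc ∑ i ∈ s, f i ^ (m + 1)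
      ≤ ∑ i ∈ s, f i * (∑ i ∈ s, f i) ^ m := by
        refine Finset.sum_le_sum fun i hi => ?_
        rw [pow_succ']
        exact mul_le_mul_of_nonneg_left
          (pow_le_pow_left₀ (hf i hi) (Finset.single_le_sum hf hi) m) (hf i hi)
    _ = (∑ i ∈ s, f i) ^ (m + 1) := by rw [← Finset.sum_mul, pow_succ']

theorem Orthonormal.sum_inner_pow_le {ι E : Type*} [Fintype ι] [NormedAddCommGroup E]
    [InnerProductSpace ℝ E] {w : ι → E} (hw : Orthonormal ℝ w) (x : E) (j₀ : ι) {n : ℕ}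
    (hn : n ≠ 0) :
    ∑ j, ⟪x, w j⟫ ^ (2 * n) ≤ ⟪x, w j₀⟫ ^ (2 * n) + (‖x‖ ^ 2 - ⟪x, w j₀⟫ ^ 2) ^ n := by
  classical
  have bessel : ⟪x, w j₀⟫ ^ 2 + ∑ j ∈ Finset.univ.erase j₀, ⟪x, w j⟫ ^ 2 ≤ ‖x‖ ^ 2 := by
    rw [Finset.add_sum_erase _ (fun j => ⟪x, w j⟫ ^ 2) (Finset.mem_univ j₀)]
    simpa [real_inner_comm] using hw.sum_inner_products_le x (s := Finset.univ)
  have rest : ∑ j ∈ Finset.univ.erase j₀, ⟪x, w j⟫ ^ (2 * n) ≤ (‖x‖ ^ 2 - ⟪x, w j₀⟫ ^ 2) ^ n :=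
    calc ∑ j ∈ Finset.univ.erase j₀, ⟪x, w j⟫ ^ (2 * n)
        = ∑ j ∈ Finset.univ.erase j₀, (⟪x, w j⟫ ^ 2) ^ n := by simp only [pow_mul]
      _ ≤ (∑ j ∈ Finset.univ.erase j₀, ⟪x, w j⟫ ^ 2) ^ n :=
        Finset.sum_pow_le_pow_sum_of_nonneg (fun j _ => sq_nonneg _) hn
      _ ≤ (‖x‖ ^ 2 - ⟪x, w j₀⟫ ^ 2) ^ n := by
        gcongr
        linarith
  rw [← Finset.add_sum_erase _ _ (Finset.mem_univ j₀)]
  gcongr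

theorem abs_sum_sum_mul_mul_le {ι κ : Type*} (s : Finset ι) (t : Finset κ) {y : ι → ℝ}
    {z : κ → ℝ} (hy : ∀ i, |y i| ≤ 1) (hz : ∀ j, |z j| ≤ 1) (a : ι → κ → ℝ) :
    |∑ i ∈ s, ∑ j ∈ t, y i * z j * a i j| ≤ ∑ i ∈ s, ∑ j ∈ t, |a i j| := by
  refine (Finset.abs_sum_le_sum_abs _ _).trans (Finset.sum_le_sum fun i _ => ?_)
  refine (Finset.abs_sum_le_sum_abs _ _).trans (Finset.sum_le_sum fun j _ => ?_)
  rw [abs_mul, abs_mul]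
  have hyz : |y i| * |z j| ≤ 1 := mul_le_one₀ (hy i) (abs_nonneg _) (hz j)
  nlinarith [abs_nonneg (a i j), abs_nonneg (y i), abs_nonneg (z j)]

theorem stmt_12_general (k : ℕ)
    (v w : (Fin k → Bool) → EuclideanSpace ℝ (Fin k → Bool))
    (hv : Orthonormal ℝ v) (hw : Orthonormal ℝ w)
    (β : ℝ) (hβ0 : 0 ≤ β) (hβ1 : β ≤ 1)
    (i₀ j₀ : Fin k → Bool)
    (hattain : |⟪v i₀, w j₀⟫| = 1 - β)
    (hmatch : ∀ i, ⟪v (xorAdd i₀ i), w (xorAdd j₀ i)⟫ = ⟪v i₀, w j₀⟫)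
    (y z : (Fin k → Bool) → ℝ)
    (hy : ∀ i, y i = 1 ∨ y i = -1) (hz : ∀ j, z j = 1 ∨ z j = -1) :
    |(1 / (2 : ℝ) ^ k) * ∑ i : Fin k → Bool, ∑ j : Fin k → Bool,
        y i * z j * ⟪v i, w j⟫ ^ 8|
      ≤ (1 - β) ^ 8 + (2 * β) ^ 4 := by
  have hrow (i : Fin k → Bool) : ∑ j, |⟪v i, w j⟫ ^ 8| ≤ (1 - β) ^ 8 + (2 * β) ^ 4 := by
    have hentry : ⟪v i, w (xorAdd j₀ (xorAdd i₀ i))⟫ ^ 2 = (1 - β) ^ 2 := by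
      rw [← hattain, sq_abs, ← hmatch, xorAdd_cancel_left]
    have hbound := hw.sum_inner_pow_le (v i) (xorAdd j₀ (xorAdd i₀ i)) (n := 4) (by norm_num)
    rw [hv.1 i, pow_mul, hentry] at hbound
    have hgap : (1 - (1 - β) ^ 2) ^ 4 ≤ (2 * β) ^ 4 := by
      gcongr <;> nlinarith
    simp only [abs_pow, Even.pow_abs (by decide : Even 8)]
    simp only [one_pow, show 2 * 4 = 8 from rfl] at hbound
    linarith
  have hsign : ∀ x : ℝ, x = 1 ∨ x = -1 → |x| ≤ 1 := by
    rintro x (rfl | rfl) <;> simp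
  have hcard : (Finset.univ : Finset (Fin k → Bool)).card = 2 ^ k := by simp
  rw [abs_mul, abs_of_pos (by positivity)]
  calc 1 / (2 : ℝ) ^ k * |∑ i, ∑ j, y i * z j * ⟪v i, w j⟫ ^ 8|
      ≤ 1 / (2 : ℝ) ^ k * ∑ i, ∑ j, |⟪v i, w j⟫ ^ 8| := by
        gcongr
        exact abs_sum_sum_mul_mul_le _ _ (fun i => hsign _ (hy i)) (fun j => hsign _ (hz j)) _
    _ ≤ 1 / (2 : ℝ) ^ k * (2 ^ k • ((1 - β) ^ 8 + (2 * β) ^ 4)) := by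
        gcongr
        exact hcard ▸ Finset.sum_le_card_nsmul _ _ _ fun i _ => hrow i
    _ = (1 - β) ^ 8 + (2 * β) ^ 4 := by
        rw [nsmul_eq_mul]
        field_simp
        push_cast
        ring

theorem stmt_12 (k : ℕ)
    (v w : (Fin k → Bool) → EuclideanSpace ℝ (Fin k → Bool))
    (hv : Orthonormal ℝ v) (hw : Orthonormal ℝ w)
    (β : ℝ) (hβ0 : 0 ≤ β) (hβ1 : β ≤ 1)
    (i₀ j₀ : Fin k → Bool)
    (hmax : ∀ i j, |⟪v i, w j⟫| ≤ 1 - β)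
    (hattain : |⟪v i₀, w j₀⟫| = 1 - β)
    (hmatch : ∀ i, ⟪v (xorAdd i₀ i), w (xorAdd j₀ i)⟫ = ⟪v i₀, w j₀⟫)
    (y z : (Fin k → Bool) → ℝ)
    (hy : ∀ i, y i = 1 ∨ y i = -1) (hz : ∀ j, z j = 1 ∨ z j = -1) :
    |(1 / (2 : ℝ) ^ k) * ∑ i : Fin k → Bool, ∑ j : Fin k → Bool,
        y i * z j * ⟪v i, w j⟫ ^ 8|
      ≤ (1 - β) ^ 8 + (2 * β) ^ 4 :=
  stmt_12_general k v w hv hw β hβ0 hβ1 i₀ j₀ hattain hmatch y z hy hz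
end
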